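/- Let n, ℓ, w be natural numbers with w ≥ n, let L : Fin n → (Fin ℓ → Fin (w+1)) be a family of lists that is Q-correlated for a set Q ⊆ Fin ℓ, let i : Fin n, let v : Fin (w+1), and let ρ : Fin r → Fin ℓ be an injective map such that ρ k₀ ∉ Q for some k₀ : Fin r. Then there exists a list L' : Fin ℓ → Fin (w+1) such that: (a) the family obtained from L by replacing the list at index i with L' is still Q-correlated, and (b) L' (ρ k₀) = v; consequently, for every family ℒ of lists of length r, the family obtained by adjoining the restricted list (fun k => L' (ρ k)) to ℒ is NOT consistent with v. (This is the precise content of Property 2 of the paper: a set of positions R containing a non-correlated position cannot be guaranteed to yield a consistent pair, because party i's list is unconstrained at non-correlated positions.) -/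
import Mathlib


/-- Property 2 of the paper: if the set of positions enumerated by `ρ` contains a
non-correlated position `ρ k₀`, then party `i`'s list is unconstrained there; there is a
list `L'` for party `i`, compatible with `Q`-correlation of the whole family, taking the
value `v` at `ρ k₀`, so that adjoining its restriction to any family `ℒ` never yields a
family consistent with `v`. -/
theorem property2 {n ℓ w r : ℕ} (hw : w ≥ n)
    (Q : Set (Fin ℓ)) (L : Fin n → Fin ℓ → Fin (w + 1))
    (hQcorr : ∀ i j : Fin n, i ≠ j → ∀ k ∈ Q, L i k ≠ L j k)
    (i : Fin n) (v : Fin (w + 1))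
    (ρ : Fin r → Fin ℓ) (hρ : Function.Injective ρ)
    (k₀ : Fin r) (hk₀ : ρ k₀ ∉ Q) :
    ∃ L' : Fin ℓ → Fin (w + 1),
      (∀ a b : Fin n, a ≠ b → ∀ k ∈ Q,
        Function.update L i L' a k ≠ Function.update L i L' b k) ∧
      L' (ρ k₀) = v ∧
      ∀ (p : ℕ) (ℒ : Fin p → Fin r → Fin (w + 1)),
        ¬ ((∀ (j : Fin (p + 1)) (k : Fin r),
              (Fin.cons (fun k => L' (ρ k)) ℒ : Fin (p + 1) → Fin r → Fin (w + 1)) j k ≠ v) ∧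
           (∀ j j' : Fin (p + 1), j ≠ j' → ∀ k : Fin r,
              (Fin.cons (fun k => L' (ρ k)) ℒ : Fin (p + 1) → Fin r → Fin (w + 1)) j k ≠
              (Fin.cons (fun k => L' (ρ k)) ℒ : Fin (p + 1) → Fin r → Fin (w + 1)) j' k)) := by
  refine ⟨Function.update (L i) (ρ k₀) v, ?_, Function.update_self _ _ _, ?_⟩
  · have key : ∀ (a : Fin n) (k : Fin ℓ), k ∈ Q →
        Function.update L i (Function.update (L i) (ρ k₀) v) a k = L a k := by
      intro a k hk
      rcases eq_or_ne a i with rfl | ha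
      · rw [Function.update_self]
        exact Function.update_of_ne (fun h : k = ρ k₀ => hk₀ (h ▸ hk)) _ _
      · rw [Function.update_of_ne ha]
    intro a b hab k hk
    rw [key a k hk, key b k hk]
    exact hQcorr a b hab k hk
  · intro p ℒ ⟨h1, _⟩
    exact h1 0 k₀ (by simp)
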